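/- Let q be a power of an odd prime with q ≡ 1 (mod 3), and let S be a multiplicative character of F_q whose order is neither 1, 3, nor 4. Let χ₃ be a character of order 3 and φ the quadratic character. Then (Σ_{x∈F_q} S((x-1)(x²+1/3)))² = q²·S(64/729)·(C(S,χ₃)+C(S,χ₃²))², where C(A,B) = B(-1)·J(A,B̄)/q. -/

import Mathlib

/-- The Jacobi sum of two multiplicative characters. -/
noncomputable def jacSum {F : Type*} [Field F] [Fintype F] (A B : MulChar F ℂ) : ℂ :=
  ∑ x : F, A x * B (1 - x)

/-- Greene's binomial coefficient `C(A,B) = B(-1)/q · J(A, B⁻¹)`. -/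
noncomputable def greeneBinom {F : Type*} [Field F] [Fintype F] (A B : MulChar F ℂ) : ℂ :=
  B (-1) / (Fintype.card F : ℂ) * jacSum A B⁻¹

/-!
Substituting `x = y + 1/3` turns the sum into `∑ y, S (y³ + c)` with `c = -8/27`. For `t ≠ 0`
the number of cube roots of `t` is `1 + χ₃ t + χ₃² t`, so the sum becomes `S c` plus
`∑ t, ψ t * S (t + c)` summed over `ψ ∈ {1, χ₃, χ₃²}`, and the substitution `t = -c u` turns
each of these into `ψ (-c) * S c * J(ψ, S)`. The trivial character contributes `-S c`, cancelling
the first term; since `-c = (2/3)³` is a cube and cubic characters are even, the other two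
contribute `q * S c * C(S, χ₃²)` and `q * S c * C(S, χ₃)`.
-/

open Finset Polynomial

section

variable {F : Type*} [Field F]

lemma FiniteField.natCast_ne_zero_of_dvd_card_sub_one [Fintype F] {n : ℕ}
    (h : n ∣ Fintype.card F - 1) : (n : F) ≠ 0 := by
  intro hn
  obtain ⟨k, hk⟩ := h
  have hq : ((Fintype.card F - 1 + 1 : ℕ) : F) = 0 := by
    rw [Nat.sub_add_cancel Fintype.card_pos, FiniteField.cast_card_eq_zero]
  simp [hk, hn] at hq

namespace MulChar

variable {R : Type*} [CommRing R]

lemma apply_pow_eq_one {χ : MulChar F R} {n : ℕ} (hχ : χ ^ n = 1) {a : F} (ha : a ≠ 0) :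
    χ (a ^ n) = 1 := by
  rw [map_pow, ← ha.isUnit.unit_spec, ← pow_apply_coe, hχ, one_apply_coe]

lemma apply_neg_one_eq_one {χ : MulChar F R} {n : ℕ} (hn : Odd n) (hχ : χ ^ n = 1) :
    χ (-1) = 1 := by
  simpa [hn.neg_one_pow] using apply_pow_eq_one hχ (neg_ne_zero.2 one_ne_zero)

variable [Fintype F]

lemma exists_pow_orderOf_eq_of_apply_eq_one {χ : MulChar F R} {a : F} (ha : a ≠ 0)
    (h : χ a = 1) : ∃ y : F, y ^ orderOf χ = a := by
  obtain ⟨g, hg⟩ := IsCyclic.exists_generator (α := Fˣ)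
  obtain ⟨k, hk : g ^ k = _⟩ := mem_powers_iff_mem_zpowers.2 (hg ha.isUnit.unit)
  have hχk : χ ^ k = 1 := by
    rw [eq_iff hg, pow_apply_coe, ← map_pow, ← Units.val_pow_eq_pow_val, hk, IsUnit.unit_spec,
      h, one_apply_coe]
  obtain ⟨m, rfl⟩ := orderOf_dvd_of_pow_eq_one hχk
  refine ⟨((g ^ m : Fˣ) : F), ?_⟩
  rw [← Units.val_pow_eq_pow_val, ← pow_mul, mul_comm, hk, IsUnit.unit_spec]

lemma exists_isPrimitiveRoot_orderOf (χ : MulChar F R) :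
    ∃ ζ : F, IsPrimitiveRoot ζ (orderOf χ) := by
  obtain ⟨g, hg⟩ := IsCyclic.exists_generator (α := Fˣ)
  have hdvd : orderOf χ ∣ orderOf g := by
    rw [orderOf_eq_card_of_forall_mem_zpowers hg, Nat.card_units, Nat.card_eq_fintype_card]
    exact orderOf_dvd_card_sub_one F χ
  refine ⟨((g ^ (orderOf g / orderOf χ) : Fˣ) : F), IsPrimitiveRoot.coe_units_iff.2 ?_⟩
  exact IsPrimitiveRoot.iff_orderOf.2 (orderOf_pow_orderOf_div (_root_.orderOf_pos g).ne' hdvd)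

variable [IsDomain R]

lemma card_pow_orderOf_eq_sum [DecidableEq F] (χ : MulChar F R) {a : F} (ha : a ≠ 0) :
    (#{y | y ^ orderOf χ = a} : R) = ∑ j ∈ range (orderOf χ), χ a ^ j := by
  obtain ⟨ζ, hζ⟩ := χ.exists_isPrimitiveRoot_orderOf
  have hcard : #{y | y ^ orderOf χ = a} = Multiset.card (nthRoots (orderOf χ) a) := by
    rw [← Multiset.toFinset_card_of_nodup (hζ.nthRoots_nodup ha)]
    congr 1
    ext y
    simp [mem_nthRoots χ.orderOf_pos]
  rw [hcard, hζ.card_nthRoots]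
  split_ifs with h
  · obtain ⟨y, rfl⟩ := h
    simp [apply_pow_eq_one (pow_orderOf_eq_one χ) (ne_zero_pow χ.orderOf_pos.ne' ha)]
  · have h1 : χ a ≠ 1 := fun h1 => h (exists_pow_orderOf_eq_of_apply_eq_one ha h1)
    have hgeom := mul_geom_sum (χ a) (orderOf χ)
    rw [← map_pow, apply_pow_eq_one (pow_orderOf_eq_one χ) ha, sub_self] at hgeom
    exact_mod_cast ((mul_eq_zero.1 hgeom).resolve_left (sub_ne_zero.2 h1)).symm

lemma sum_comp_pow_orderOf (χ : MulChar F R) (f : F → R) :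
    ∑ y, f (y ^ orderOf χ) = f 0 + ∑ j ∈ range (orderOf χ), ∑ t, (χ ^ j) t * f t := by
  classical
  have fiber (t : F) : ∑ y with y ^ orderOf χ = t, f (y ^ orderOf χ) =
      (if t = 0 then f 0 else 0) + ∑ j ∈ range (orderOf χ), (χ ^ j) t * f t := by
    rcases eq_or_ne t 0 with rfl | ht
    · simp [χ.orderOf_pos.ne', sum_filter]
    · rw [sum_congr rfl fun y hy => by rw [(mem_filter.1 hy).2], sum_const, nsmul_eq_mul,
        card_pow_orderOf_eq_sum χ ht, if_neg ht, zero_add, sum_mul]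
      refine sum_congr rfl fun j _ => ?_
      rw [← ht.isUnit.unit_spec, pow_apply_coe]
  rw [← sum_fiberwise univ (· ^ orderOf χ), sum_congr rfl fun t _ => fiber t, sum_add_distrib,
    sum_ite_eq', if_pos (mem_univ _), sum_comm]

end MulChar

variable [Fintype F]

lemma sum_mul_apply_add_eq_jacobiSum {R : Type*} [CommRing R] (ψ S : MulChar F R) {c : F}
    (hc : c ≠ 0) : ∑ t, ψ t * S (t + c) = ψ (-c) * S c * jacobiSum ψ S := by
  rw [jacobiSum, mul_sum]
  refine (Fintype.sum_equiv (Equiv.mulLeft₀ (-c) (neg_ne_zero.2 hc)) _ _ fun u => ?_).symm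
  change _ = ψ (-c * u) * S (-c * u + c)
  rw [show -c * u + c = c * (1 - u) by ring, map_mul, map_mul]
  ring

lemma jacobiSum_eq_card_mul_greeneBinom (S : MulChar F ℂ) {ψ : MulChar F ℂ}
    (hψ : ψ (-1) = 1) : jacobiSum S ψ = Fintype.card F * greeneBinom S ψ⁻¹ := by
  have hq : (Fintype.card F : ℂ) ≠ 0 := Nat.cast_ne_zero.2 Fintype.card_ne_zero
  rw [greeneBinom, inv_inv, MulChar.inv_apply', inv_neg, inv_one, hψ, ← mul_assoc,
    mul_one_div_cancel hq, one_mul]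
  rfl

theorem sum_mulChar_cubic_eq_greeneBinom {S χ : MulChar F ℂ} (h2 : (2 : F) ≠ 0) (hS : S ≠ 1)
    (hχ : orderOf χ = 3) :
    ∑ x : F, S ((x - 1) * (x ^ 2 + (3 : F)⁻¹)) =
      Fintype.card F * S (-(8 / 27)) * (greeneBinom S χ + greeneBinom S (χ ^ 2)) := by
  have h3 : (3 : F) ≠ 0 := by
    exact_mod_cast FiniteField.natCast_ne_zero_of_dvd_card_sub_one
      (hχ ▸ χ.orderOf_dvd_card_sub_one F)
  set c : F := -(8 / 27) with hc_def
  have hc : -c = (2 / 3) ^ 3 := by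
    rw [div_pow]
    norm_num [c]
  have h23 : (2 / 3 : F) ≠ 0 := div_ne_zero h2 h3
  have hc0 : c ≠ 0 := neg_ne_zero.1 (hc ▸ pow_ne_zero 3 h23)
  have hχ3 : χ ^ 3 = 1 := hχ ▸ pow_orderOf_eq_one χ
  have hχ23 : (χ ^ 2) ^ 3 = 1 := by rw [← pow_mul, mul_comm, pow_mul, hχ3, one_pow]
  have hinv : χ⁻¹ = χ ^ 2 := inv_eq_of_mul_eq_one_right (by rw [← pow_succ', hχ3])
  have hinv' : (χ ^ 2)⁻¹ = χ := by rw [← hinv, inv_inv]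
  have shift : ∑ x, S ((x - 1) * (x ^ 2 + 3⁻¹)) = ∑ y, S (y ^ 3 + c) := by
    refine (Fintype.sum_equiv (Equiv.addRight 3⁻¹) _ _ fun y => ?_).symm
    rw [Equiv.coe_addRight]
    congr 1
    rw [hc_def, show (8 / 27 : F) = 2 ^ 3 / 3 ^ 3 by norm_num]
    field_simp
    ring
  have fibers := χ.sum_comp_pow_orderOf fun t => S (t + c)
  rw [hχ] at fibers
  simp only [sum_range_succ, sum_range_zero, zero_add, pow_zero, pow_one,
    sum_mul_apply_add_eq_jacobiSum _ S hc0, jacobiSum_one_nontrivial hS, jacobiSum_comm χ S,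
    jacobiSum_comm (χ ^ 2) S,
    jacobiSum_eq_card_mul_greeneBinom S (MulChar.apply_neg_one_eq_one (by decide) hχ3),
    jacobiSum_eq_card_mul_greeneBinom S (MulChar.apply_neg_one_eq_one (by decide) hχ23)] at fibers
  rw [shift, fibers, hc, MulChar.apply_pow_eq_one hχ3 h23, MulChar.apply_pow_eq_one hχ23 h23,
    MulChar.one_apply (pow_ne_zero 3 h23).isUnit, hinv, hinv']
  ring

end

theorem stmt16_general (F : Type*) [Field F] [Fintype F]
    (hodd : Odd (Fintype.card F))
    (S : MulChar F ℂ) (hS1 : orderOf S ≠ 1)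
    (χ₃ : MulChar F ℂ) (hχ₃ : orderOf χ₃ = 3) :
    (∑ x : F, S ((x - 1) * (x ^ 2 + (3 : F)⁻¹))) ^ 2 =
      (Fintype.card F : ℂ) ^ 2 * S ((64 : F) / 729) *
        (greeneBinom S χ₃ + greeneBinom S (χ₃ ^ 2)) ^ 2 := by
  have h2 : (2 : F) ≠ 0 := by
    exact_mod_cast FiniteField.natCast_ne_zero_of_dvd_card_sub_one
      (Nat.Odd.sub_odd hodd odd_one).two_dvd
  have hS : S ≠ 1 := fun h => hS1 (h ▸ orderOf_one)
  have h64 : (64 / 729 : F) = (-(8 / 27)) ^ 2 := by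
    rw [neg_sq, div_pow]
    norm_num
  rw [sum_mulChar_cubic_eq_greeneBinom h2 hS hχ₃, h64, map_pow]
  ring

/-- If `q ≡ 1 (mod 3)` and `S` has order not in `{1,3,4}`, then
`(Σ_x S((x-1)(x²+1/3)))² = q²·S(64/729)·(C(S,χ₃)+C(S,χ₃²))²`. -/
theorem stmt16 (F : Type*) [Field F] [Fintype F]
    (hodd : Odd (Fintype.card F)) (hq : Fintype.card F % 3 = 1)
    (S : MulChar F ℂ) (hS1 : orderOf S ≠ 1) (hS3 : orderOf S ≠ 3) (hS4 : orderOf S ≠ 4)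
    (χ₃ : MulChar F ℂ) (hχ₃ : orderOf χ₃ = 3) :
    (∑ x : F, S ((x - 1) * (x ^ 2 + (3 : F)⁻¹))) ^ 2 =
      (Fintype.card F : ℂ) ^ 2 * S ((64 : F) / 729) *
        (greeneBinom S χ₃ + greeneBinom S (χ₃ ^ 2)) ^ 2 :=
  stmt16_general F hodd S hS1 χ₃ hχ₃
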